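/- arXiv:math/0503185 — 2 statements merged into one kernel-verified Lean document; each statement's English description precedes it below -/
import Mathlib

section
/- Let $d \in \mathbb{N}$ and $a_{-d}, \dots, a_d \in \mathbb{C}$, and set $B_m = \sum_{k=-d}^{d} a_k \frac{k^m}{m!}$ for $m \in \mathbb{N}$. Define $\lambda_{m,n} = \frac{1}{2\pi} \int_0^{2\pi} (it)^m e^{-int}\, dt$ for $m \in \mathbb{N}$ and $n \in \mathbb{Z}$. Then for every integer $n$ with $-d \leq n \leq d$, $a_n = \sum_{m=0}^{\infty} B_m \lambda_{m,n}$, with the series converging absolutely. -/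
/-!
Orthogonality is the whole point: expanding `exp (I k t) = ∑ₘ (I k t)^m / m!` and integrating
termwise against `exp (-I n t)` over `[0, 2π]` gives `∑ₘ k^m / m! * λ m n = δ k n`. Termwise
integration is justified by the domination `‖k^m / m! * (I t)^m * exp (-I n t)‖ ≤ (2π|k|)^m / m!`,
which also bounds `‖k^m / m! * λ m n‖` and so gives absolute convergence. Summing over `k`
with weights `a k` turns `∑ₘ B m * λ m n` into `a n`.
-/

open Finset Complex Real MeasureTheory intervalIntegral
open scoped Nat

noncomputable def fourierMoment (m : ℕ) (n : ℤ) : ℂ :=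
  (1 / (2 * π)) * ∫ t in (0:ℝ)..(2 * π), (I * t) ^ m * exp (-(I * n * t))

lemma norm_I_mul_pow_mul_exp_le (m : ℕ) (x : ℝ) {t : ℝ} (ht : t ∈ Set.uIoc 0 (2 * π)) :
    ‖(I * t) ^ m * exp (-(I * x * t))‖ ≤ (2 * π) ^ m := by
  rw [Set.uIoc_of_le (by positivity)] at ht
  rw [norm_mul, norm_exp]
  simpa [abs_of_pos ht.1] using pow_le_pow_left₀ ht.1.le ht.2 m

lemma norm_pow_div_factorial_mul_le (z y : ℂ) (m : ℕ) {C : ℝ} (hy : ‖y‖ ≤ C ^ m) :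
    ‖z ^ m / m ! * y‖ ≤ (‖z‖ * C) ^ m / m ! := by
  calc ‖z ^ m / m ! * y‖ ≤ ‖z‖ ^ m / m ! * C ^ m := by
        rw [norm_mul, norm_div, norm_pow, Complex.norm_natCast]
        gcongr
    _ = (‖z‖ * C) ^ m / m ! := by ring

lemma norm_fourierMoment_le (m : ℕ) (n : ℤ) : ‖fourierMoment m n‖ ≤ (2 * π) ^ m := by
  have hbound : ∀ t ∈ Set.uIoc 0 (2 * π), ‖(I * t) ^ m * exp (-(I * n * t))‖ ≤ (2 * π) ^ m :=
    fun t ht => mod_cast norm_I_mul_pow_mul_exp_le m n ht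
  calc ‖fourierMoment m n‖
      ≤ (1 / (2 * π)) * ((2 * π) ^ m * |2 * π - 0|) := by
        rw [fourierMoment, norm_mul]
        gcongr
        · simp [abs_of_pos pi_pos]
        · exact norm_integral_le_of_norm_le_const hbound
    _ = (2 * π) ^ m := by
        rw [sub_zero, abs_of_pos (by positivity)]
        field_simp

lemma integral_exp_I_mul_int_sub (k n : ℤ) :
    ∫ t in (0:ℝ)..(2 * π), exp (I * (k - n) * t) = if k = n then (2 * π : ℂ) else 0 := by
  split_ifs with hkn
  · simp [hkn]
  · have hc : I * ((k:ℂ) - n) ≠ 0 :=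
      mul_ne_zero I_ne_zero (sub_ne_zero.mpr (mod_cast hkn))
    rw [integral_exp_mul_complex hc]
    have hperiod : I * ((k:ℂ) - n) * (2 * π : ℝ) = ((k - n : ℤ) : ℂ) * (2 * π * I) := by
      push_cast
      ring
    rw [hperiod, exp_int_mul_two_pi_mul_I]
    simp

lemma hasSum_pow_div_factorial_mul_exp (z w t : ℂ) :
    HasSum (fun m : ℕ => z ^ m / m ! * ((I * t) ^ m * exp (-(I * w * t))))
      (exp (I * (z - w) * t)) := by
  have hexp : HasSum (fun m : ℕ => (I * z * t) ^ m / m !) (exp (I * z * t)) := by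
    rw [exp_eq_exp_ℂ]
    exact NormedSpace.expSeries_div_hasSum_exp _
  have hterm : ∀ m : ℕ, z ^ m / m ! * ((I * t) ^ m * exp (-(I * w * t))) =
      (I * z * t) ^ m / m ! * exp (-(I * w * t)) := fun m => by ring
  rw [show I * (z - w) * t = I * z * t + -(I * w * t) by ring, Complex.exp_add]
  simpa only [hterm] using hexp.mul_right (exp (-(I * w * t)))

lemma hasSum_integral_pow_div_factorial_mul_exp (k n : ℤ) :
    HasSum (fun m : ℕ => ∫ t in (0:ℝ)..(2 * π),
        (k:ℂ) ^ m / m ! * ((I * t) ^ m * exp (-(I * n * t))))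
      (∫ t in (0:ℝ)..(2 * π), exp (I * (k - n) * t)) :=
  hasSum_integral_of_dominated_convergence (fun m _ => (‖(k:ℂ)‖ * (2 * π)) ^ m / m !)
    (fun _ => (by fun_prop : Continuous _).aestronglyMeasurable)
    (fun m => .of_forall fun t ht =>
      norm_pow_div_factorial_mul_le _ _ m (mod_cast norm_I_mul_pow_mul_exp_le m n ht))
    (.of_forall fun _ _ => summable_pow_div_factorial _) intervalIntegrable_const
    (.of_forall fun t _ => hasSum_pow_div_factorial_mul_exp k n t)

lemma hasSum_pow_div_factorial_mul_fourierMoment (k n : ℤ) :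
    HasSum (fun m : ℕ => (k:ℂ) ^ m / m ! * fourierMoment m n) (if k = n then 1 else 0) := by
  have hseries := hasSum_integral_pow_div_factorial_mul_exp k n
  rw [integral_exp_I_mul_int_sub] at hseries
  have hterm : ∀ m : ℕ, (k:ℂ) ^ m / m ! * fourierMoment m n = 1 / (2 * π) *
      ∫ t in (0:ℝ)..(2 * π), (k:ℂ) ^ m / m ! * ((I * t) ^ m * exp (-(I * n * t))) := by
    intro m
    rw [fourierMoment, intervalIntegral.integral_const_mul]
    ring
  have hnormalize :
      (if k = n then 1 else 0 : ℂ) = 1 / (2 * π) * if k = n then (2 * π : ℂ) else 0 := by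
    split_ifs <;> simp [field]
  simpa only [hterm, hnormalize] using hseries.mul_left (1 / (2 * π : ℂ))

lemma summable_norm_pow_div_factorial_mul_fourierMoment (k n : ℤ) :
    Summable fun m : ℕ => ‖(k:ℂ) ^ m / m ! * fourierMoment m n‖ :=
  .of_nonneg_of_le (fun _ => norm_nonneg _)
    (fun m => norm_pow_div_factorial_mul_le _ _ m (norm_fourierMoment_le m n))
    (summable_pow_div_factorial _)

theorem stmt6 (d : ℕ) (a : ℤ → ℂ)
    (B : ℕ → ℂ)
    (hB : ∀ m : ℕ, B m = ∑ k ∈ Finset.Icc (-(d:ℤ)) d, a k * (k:ℂ)^m / (Nat.factorial m))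
    (lam : ℕ → ℤ → ℂ)
    (hlam : ∀ (m : ℕ) (n : ℤ), lam m n = (1 / (2 * Real.pi)) *
      ∫ t in (0:ℝ)..(2 * Real.pi), (Complex.I * t)^m * Complex.exp (-(Complex.I * n * t))) :
    ∀ n : ℤ, -(d:ℤ) ≤ n → n ≤ d →
      Summable (fun m : ℕ => ‖B m * lam m n‖) ∧
      HasSum (fun m : ℕ => B m * lam m n) (a n) := by
  intro n hn1 hn2
  obtain rfl : lam = fourierMoment := funext₂ hlam
  have hterm : ∀ m : ℕ, B m * fourierMoment m n =
      ∑ k ∈ Icc (-(d:ℤ)) d, a k * ((k:ℂ) ^ m / m ! * fourierMoment m n) := by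
    intro m
    rw [hB, sum_mul]
    exact sum_congr rfl fun k _ => by ring
  simp only [hterm]
  constructor
  · refine .of_nonneg_of_le (fun _ => norm_nonneg _) (fun m => norm_sum_le _ _)
      (summable_sum fun k _ => ?_)
    simpa only [norm_mul] using
      (summable_norm_pow_div_factorial_mul_fourierMoment k n).mul_left ‖a k‖
  · simpa [hn1, hn2] using hasSum_sum (s := Icc (-(d:ℤ)) d) fun k _ =>
      (hasSum_pow_div_factorial_mul_fourierMoment k n).mul_left (a k)
end

section
/- Let $d \in \mathbb{N}$, $a_{-d}, \dots, a_d \in \mathbb{C}$, $B_m = \sum_{k=-d}^d a_k \frac{k^m}{m!}$, and $\lambda_{m,n} = \frac{1}{2\pi}\int_0^{2\pi}(it)^m e^{-int} dt$. Define the partial sums $v^N_n = \sum_{m=0}^{N} \lambda_{m,n} B_m$. Then for every integer $n$ with $|n| \leq d$, $\lim_{N \to \infty} v^N_n = a_n$. -/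
/-!
Expanding `e^{ikt} = ∑ₘ (ikt)^m / m!` under the integral (dominated by `e^{|k| t}`) gives
`∑ₘ λ_{m,n} k^m / m! = (2π)⁻¹ ∫₀^{2π} e^{ikt} e^{-int} dt = δ_{kn}`. Summing against the
finitely many `a_k` shows that `∑ₘ λ_{m,n} B_m` converges to `a_n`.
-/

open Finset Complex Real Filter Topology MeasureTheory

open scoped Nat

theorem hasSum_intervalIntegral_pow_div_factorial_mul {g : ℝ → ℂ} (hg : Continuous g) (z : ℂ)
    (a b : ℝ) :
    HasSum (fun m : ℕ => ∫ t in a..b, (z * t) ^ m / m ! * g t)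
      (∫ t in a..b, Complex.exp (z * t) * g t) := by
  have hbound_sum (t : ℝ) :
      HasSum (fun m : ℕ => ‖z * t‖ ^ m / m ! * ‖g t‖) (Real.exp ‖z * t‖ * ‖g t‖) := by
    have h : HasSum (fun m : ℕ => ‖z * t‖ ^ m / m !) (Real.exp ‖z * t‖) := by
      rw [Real.exp_eq_exp_ℝ]
      exact NormedSpace.expSeries_div_hasSum_exp _
    exact h.mul_right _
  refine intervalIntegral.hasSum_integral_of_dominated_convergence
    (fun m t => ‖z * t‖ ^ m / m ! * ‖g t‖) (fun m => ?_) (fun m => ae_of_all _ fun t _ => ?_)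
    (ae_of_all _ fun t _ => (hbound_sum t).summable) ?_ (ae_of_all _ fun t _ => ?_)
  · exact Continuous.aestronglyMeasurable (by fun_prop)
  · simp
  · simp only [fun t => (hbound_sum t).tsum_eq]
    exact Continuous.intervalIntegrable (by fun_prop) _ _
  · have h : HasSum (fun m : ℕ => (z * t) ^ m / m !) (Complex.exp (z * t)) := by
      rw [Complex.exp_eq_exp_ℂ]
      exact NormedSpace.expSeries_div_hasSum_exp _
    exact h.mul_right _

theorem integral_exp_int_mul_exp_neg_int (k n : ℤ) :
    (1 / (2 * π)) * ∫ t in (0:ℝ)..(2 * π),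
      Complex.exp (I * k * t) * Complex.exp (-(I * n * t)) = if k = n then 1 else 0 := by
  have hexp : ∀ t : ℝ, Complex.exp (I * k * t) * Complex.exp (-(I * n * t))
      = Complex.exp (I * (k - n) * t) := fun t => by
    rw [← Complex.exp_add]; ring_nf
  simp only [hexp]
  split_ifs with hkn
  · subst hkn
    simp [field]
  · have hc : I * ((k : ℂ) - n) ≠ 0 :=
      mul_ne_zero I_ne_zero (sub_ne_zero.mpr (mod_cast hkn))
    have hperiod : I * ((k : ℂ) - n) * ((2 * π : ℝ) : ℂ) = ((k - n : ℤ) : ℂ) * (2 * π * I) := by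
      push_cast; ring
    rw [integral_exp_mul_complex hc, hperiod, Complex.exp_int_mul_two_pi_mul_I]
    simp

/-- The coefficient `λ_{m,n}`. -/
noncomputable def moment (m : ℕ) (n : ℤ) : ℂ :=
  (1 / (2 * π)) * ∫ t in (0:ℝ)..(2 * π), (I * t) ^ m * Complex.exp (-(I * n * t))

theorem hasSum_moment_mul_pow_div_factorial (k n : ℤ) :
    HasSum (fun m : ℕ => moment m n * ((k : ℂ) ^ m / m !)) (if k = n then 1 else 0) := by
  have h := (hasSum_intervalIntegral_pow_div_factorial_mul
    (g := fun t : ℝ => Complex.exp (-(I * n * t))) (by fun_prop) (I * k) 0 (2 * π)).mul_left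
    (1 / (2 * π : ℂ))
  rw [integral_exp_int_mul_exp_neg_int] at h
  refine h.congr_fun fun m => ?_
  rw [moment, mul_assoc, ← intervalIntegral.integral_mul_const]
  congr 2 with t
  ring

theorem stmt18 (d : ℕ) (a : ℤ → ℂ)
    (B : ℕ → ℂ)
    (hB : ∀ m : ℕ, B m = ∑ k ∈ Finset.Icc (-(d:ℤ)) d, a k * (k:ℂ)^m / (Nat.factorial m))
    (lam : ℕ → ℤ → ℂ)
    (hlam : ∀ (m : ℕ) (n : ℤ), lam m n = (1 / (2 * Real.pi)) *
      ∫ t in (0:ℝ)..(2 * Real.pi), (Complex.I * t)^m * Complex.exp (-(Complex.I * n * t)))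
    (v : ℕ → ℤ → ℂ)
    (hv : ∀ (N : ℕ) (n : ℤ), v N n = ∑ m ∈ Finset.range (N + 1), lam m n * B m) :
    ∀ n : ℤ, |n| ≤ (d:ℤ) → Tendsto (fun N : ℕ => v N n) atTop (𝓝 (a n)) := by
  intro n hn
  obtain rfl : lam = moment := funext₂ hlam
  have hmem : n ∈ Icc (-(d : ℤ)) d := mem_Icc.mpr (abs_le.mp hn)
  have hsum : HasSum (fun m => moment m n * B m) (a n) := by
    have hdelta := hasSum_sum fun k (_ : k ∈ Icc (-(d : ℤ)) d) =>
      (hasSum_moment_mul_pow_div_factorial k n).mul_left (a k)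
    simp only [mul_ite, mul_one, mul_zero, sum_ite_eq', if_pos hmem] at hdelta
    refine hdelta.congr_fun fun m => ?_
    rw [hB, mul_sum]
    exact sum_congr rfl fun k _ => by ring
  simp only [hv]
  exact (tendsto_add_atTop_iff_nat 1).mpr hsum.tendsto_sum_nat
end
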